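/- Let λ < 0, μ > 0, δ₀ ≥ 0, ε₀ > √δ₀ > 0, A, B > 0, and define E(t) = min{ −√δ₀/|λ| + ε₀ e^{|λ|t}, A√δ₀ + B e^{−μ t} } for t ≥ 0. If t₀ ≥ 0 satisfies −√δ₀/|λ| + ε₀ e^{|λ| t₀} = A√δ₀ + B e^{−μ t₀}, then t₀ > log(B/ε₀)/(|λ| + μ) and sup_{t ≥ 0} E(t) ≤ A√δ₀ + B^{|λ|/(|λ|+μ)} ε₀^{μ/(|λ|+μ)}. -/

import Mathlib

/-!
Left of the crossing time `t₀` the minimum is at most the increasing branch, right of it at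
most the decreasing one, so it never exceeds the common value at `t₀`. At the crossing
`B e^{-μ t₀} < ε₀ e^{|λ| t₀}`, i.e. `B e^{-(|λ|+μ) t₀} < ε₀`, which gives the lower bound on `t₀`;
and writing `B e^{-μ t₀} = B^{1-θ} (B e^{-(|λ|+μ) t₀})^θ` with `θ = μ/(|λ|+μ)` bounds the
decreasing branch at `t₀` by `B^{1-θ} ε₀^θ`.
-/

open Real

theorem min_le_of_monotone_of_antitone_of_eq {α β : Type*} [LinearOrder α] [LinearOrder β]
    {f g : α → β} (hf : Monotone f) (hg : Antitone g) {t₀ : α} (h : f t₀ = g t₀) (t : α) :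
    min (f t) (g t) ≤ g t₀ := by
  rcases le_total t t₀ with ht | ht
  · exact (min_le_left _ _).trans (h ▸ hf ht)
  · exact (min_le_right _ _).trans (hg ht)

theorem log_div_div_lt_of_mul_exp_lt {a μ B ε t : ℝ} (hB : 0 < B) (hε : 0 < ε) (hs : 0 < a + μ)
    (h : B * exp (-μ * t) < ε * exp (a * t)) : log (B / ε) / (a + μ) < t := by
  rw [div_lt_iff₀ hs, log_lt_iff_lt_exp (div_pos hB hε), div_lt_iff₀ hε]
  calc B = B * exp (-μ * t) * exp (μ * t) := by rw [mul_assoc, ← exp_add]; simp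
    _ < ε * exp (a * t) * exp (μ * t) := by gcongr
    _ = exp (t * (a + μ)) * ε := by rw [mul_assoc, ← exp_add]; ring_nf

theorem mul_exp_neg_le_rpow_mul_rpow {a μ B ε t : ℝ} (hμ : 0 ≤ μ) (hs : 0 < a + μ) (hB : 0 < B)
    (h : B * exp (-μ * t) ≤ ε * exp (a * t)) :
    B * exp (-μ * t) ≤ B ^ (a / (a + μ)) * ε ^ (μ / (a + μ)) := by
  set θ := μ / (a + μ) with hθdef
  have hθ : a / (a + μ) = 1 - θ := by
    rw [hθdef, eq_sub_iff_add_eq, ← add_div, div_self hs.ne']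
  have hdecay : B * exp (-(a + μ) * t) ≤ ε := by
    calc B * exp (-(a + μ) * t) = B * exp (-μ * t) * exp (-(a * t)) := by
          rw [mul_assoc, ← exp_add]; ring_nf
      _ ≤ ε * exp (a * t) * exp (-(a * t)) := by gcongr
      _ = ε := by rw [mul_assoc, ← exp_add]; simp
  calc B * exp (-μ * t) = B ^ (1 - θ) * (B * exp (-(a + μ) * t)) ^ θ := by
        rw [mul_rpow hB.le (exp_pos _).le, ← exp_mul, ← mul_assoc, ← rpow_add hB, sub_add_cancel,
          rpow_one]
        rw [hθdef]
        field_simp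
    _ ≤ B ^ (1 - θ) * ε ^ θ := by gcongr
    _ = B ^ (a / (a + μ)) * ε ^ θ := by rw [hθ]

theorem stmt5_general (lam μ δ₀ ε₀ A B t₀ : ℝ) (hlam : lam < 0) (hμ : 0 < μ)
    (hδ₀ : 0 < Real.sqrt δ₀) (hε₀ : Real.sqrt δ₀ < ε₀)
    (hA : 0 < A) (hB : 0 < B)
    (hcross : -Real.sqrt δ₀ / |lam| + ε₀ * Real.exp (|lam| * t₀) =
      A * Real.sqrt δ₀ + B * Real.exp (-μ * t₀)) :
    Real.log (B / ε₀) / (|lam| + μ) < t₀ ∧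
    ∀ t : ℝ, 0 ≤ t →
      min (-Real.sqrt δ₀ / |lam| + ε₀ * Real.exp (|lam| * t))
          (A * Real.sqrt δ₀ + B * Real.exp (-μ * t)) ≤
        A * Real.sqrt δ₀ + B ^ (|lam| / (|lam| + μ)) * ε₀ ^ (μ / (|lam| + μ)) := by
  have hlam' : 0 < |lam| := abs_pos.mpr hlam.ne
  have hε : 0 < ε₀ := hδ₀.trans hε₀
  have hs : 0 < |lam| + μ := by positivity
  have hlt : B * exp (-μ * t₀) < ε₀ * exp (|lam| * t₀) := by
    have : 0 < sqrt δ₀ / |lam| := div_pos hδ₀ hlam'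
    rw [neg_div] at hcross
    linarith [mul_pos hA hδ₀]
  refine ⟨log_div_div_lt_of_mul_exp_lt hB hε hs hlt, fun t _ => ?_⟩
  have hinc : Monotone fun t => -sqrt δ₀ / |lam| + ε₀ * exp (|lam| * t) := fun x y hxy => by
    dsimp only; gcongr
  have hdec : Antitone fun t => A * sqrt δ₀ + B * exp (-μ * t) := fun x y hxy => by
    have : -μ * y ≤ -μ * x := mul_le_mul_of_nonpos_left hxy (by linarith)
    dsimp only; gcongr
  calc _ ≤ A * sqrt δ₀ + B * exp (-μ * t₀) :=
        min_le_of_monotone_of_antitone_of_eq hinc hdec hcross t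
    _ ≤ _ := add_le_add_right (mul_exp_neg_le_rpow_mul_rpow hμ.le hs hB hlt.le) _

theorem stmt5 (lam μ δ₀ ε₀ A B t₀ : ℝ) (hlam : lam < 0) (hμ : 0 < μ)
    (hδ₀ : 0 < Real.sqrt δ₀) (hε₀ : Real.sqrt δ₀ < ε₀)
    (hA : 0 < A) (hB : 0 < B) (ht₀ : 0 ≤ t₀)
    (hcross : -Real.sqrt δ₀ / |lam| + ε₀ * Real.exp (|lam| * t₀) =
      A * Real.sqrt δ₀ + B * Real.exp (-μ * t₀)) :
    Real.log (B / ε₀) / (|lam| + μ) < t₀ ∧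
    ∀ t : ℝ, 0 ≤ t →
      min (-Real.sqrt δ₀ / |lam| + ε₀ * Real.exp (|lam| * t))
          (A * Real.sqrt δ₀ + B * Real.exp (-μ * t)) ≤
        A * Real.sqrt δ₀ + B ^ (|lam| / (|lam| + μ)) * ε₀ ^ (μ / (|lam| + μ)) :=
  stmt5_general lam μ δ₀ ε₀ A B t₀ hlam hμ hδ₀ hε₀ hA hB hcross
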